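/- Let c : ℝ³ → ℂ be the symbol of the cubic nonlinearity with the conservative property: c(ξ,ξ,ξ) ∈ ℝ and ∂_{ξ_j}c(ξ,ξ,ξ) ∈ ℝ for j = 1,2,3. Define the symmetrized quartic mass symbol on {ξ1-ξ2+ξ3-ξ4 = 0} by c⁴_m(ξ1,ξ2,ξ3,ξ4) = (i/4)[-(c(ξ1,ξ2,ξ3) + c(ξ1,ξ4,ξ3)) + (c̄(ξ2,ξ3,ξ4) + c̄(ξ2,ξ1,ξ4))]. Then c⁴_m vanishes to second order on the doubly resonant set {ξ1 = ξ2 = ξ3 = ξ4}: c⁴_m(ξ,ξ,ξ,ξ) = 0 and all first-order directional derivatives of c⁴_m along the constraint surface vanish at (ξ,ξ,ξ,ξ). -/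

import Mathlib

open ComplexConjugate

/-- The symmetrized quartic mass symbol
`c⁴_m = (i/4)[-(c(ξ1,ξ2,ξ3)+c(ξ1,ξ4,ξ3)) + (c̄(ξ2,ξ3,ξ4)+c̄(ξ2,ξ1,ξ4))]`. -/
noncomputable def quarticMassSymbol (c : ℝ × ℝ × ℝ → ℂ) (ξ1 ξ2 ξ3 ξ4 : ℝ) : ℂ :=
  (Complex.I / 4) *
    (-(c (ξ1, ξ2, ξ3) + c (ξ1, ξ4, ξ3))
      + (conj (c (ξ2, ξ3, ξ4)) + conj (c (ξ2, ξ1, ξ4))))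

/-- If the cubic symbol `c` is conservative (`c(ξ,ξ,ξ)` and `∂_{ξ_j}c(ξ,ξ,ξ)` real),
then the symmetrized quartic mass symbol `c⁴_m` vanishes to second order on the
doubly resonant set `{ξ1 = ξ2 = ξ3 = ξ4}`: it vanishes there, and all first-order
directional derivatives along directions tangent to `{ξ1-ξ2+ξ3-ξ4 = 0}` vanish. -/
theorem conservative_quartic_symbol_vanishing (c : ℝ × ℝ × ℝ → ℂ)
    (hc : ContDiff ℝ (⊤ : ℕ∞) c)
    (hsymc : ∀ a b d : ℝ, c (a, b, d) = c (d, b, a))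
    (hre : ∀ ξ : ℝ, (c (ξ, ξ, ξ)).im = 0)
    (hre1 : ∀ ξ : ℝ, (deriv (fun t => c (t, ξ, ξ)) ξ).im = 0)
    (hre2 : ∀ ξ : ℝ, (deriv (fun t => c (ξ, t, ξ)) ξ).im = 0)
    (hre3 : ∀ ξ : ℝ, (deriv (fun t => c (ξ, ξ, t)) ξ).im = 0) :
    ∀ ξ : ℝ,
      quarticMassSymbol c ξ ξ ξ ξ = 0 ∧
      ∀ v1 v2 v3 v4 : ℝ, v1 - v2 + v3 - v4 = 0 →
        deriv (fun t : ℝ =>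
          quarticMassSymbol c (ξ + t * v1) (ξ + t * v2) (ξ + t * v3) (ξ + t * v4)) 0
          = 0 := by
  intro ξ
  have hdiff : Differentiable ℝ c := hc.differentiable (by simp)
  set F := fderiv ℝ c (ξ, ξ, ξ) with hF
  have hcurve : ∀ v1 v2 v3 : ℝ,
      HasDerivAt (fun t : ℝ => c (ξ + t * v1, ξ + t * v2, ξ + t * v3))
        (F (v1, v2, v3)) 0 := by
    intro v1 v2 v3
    have hx : ∀ v : ℝ, HasDerivAt (fun t : ℝ => ξ + t * v) v 0 := by
      intro v
      simpa using ((hasDerivAt_id (0:ℝ)).mul_const v).const_add ξ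
    have h1 : HasDerivAt (fun t : ℝ => ((ξ + t * v1, ξ + t * v2, ξ + t * v3) : ℝ × ℝ × ℝ))
        ((v1, v2, v3) : ℝ × ℝ × ℝ) 0 := (hx v1).prodMk ((hx v2).prodMk (hx v3))
    have hfd : HasFDerivAt c F ((fun t : ℝ => ((ξ + t * v1, ξ + t * v2, ξ + t * v3) : ℝ × ℝ × ℝ)) 0) := by
      simpa using (hdiff (ξ, ξ, ξ)).hasFDerivAt
    exact hfd.comp_hasDerivAt 0 h1
  have haxis1 : HasDerivAt (fun t : ℝ => c (t, ξ, ξ)) (F (1, 0, 0)) ξ := by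
    have h1 : HasDerivAt (fun t : ℝ => ((t, ξ, ξ) : ℝ × ℝ × ℝ)) ((1, 0, 0) : ℝ × ℝ × ℝ) ξ :=
      (hasDerivAt_id ξ).prodMk ((hasDerivAt_const ξ ξ).prodMk (hasDerivAt_const ξ ξ))
    exact (hdiff (ξ, ξ, ξ)).hasFDerivAt.comp_hasDerivAt ξ h1
  have haxis2 : HasDerivAt (fun t : ℝ => c (ξ, t, ξ)) (F (0, 1, 0)) ξ := by
    have h1 : HasDerivAt (fun t : ℝ => ((ξ, t, ξ) : ℝ × ℝ × ℝ)) ((0, 1, 0) : ℝ × ℝ × ℝ) ξ :=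
      (hasDerivAt_const ξ ξ).prodMk ((hasDerivAt_id ξ).prodMk (hasDerivAt_const ξ ξ))
    exact (hdiff (ξ, ξ, ξ)).hasFDerivAt.comp_hasDerivAt ξ h1
  have haxis3 : HasDerivAt (fun t : ℝ => c (ξ, ξ, t)) (F (0, 0, 1)) ξ := by
    have h1 : HasDerivAt (fun t : ℝ => ((ξ, ξ, t) : ℝ × ℝ × ℝ)) ((0, 0, 1) : ℝ × ℝ × ℝ) ξ :=
      (hasDerivAt_const ξ ξ).prodMk ((hasDerivAt_const ξ ξ).prodMk (hasDerivAt_id ξ))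
    exact (hdiff (ξ, ξ, ξ)).hasFDerivAt.comp_hasDerivAt ξ h1
  set d1 := F (1, 0, 0) with hd1
  set d2 := F (0, 1, 0) with hd2
  set d3 := F (0, 0, 1) with hd3
  have him1 : d1.im = 0 := by rw [← haxis1.deriv]; exact hre1 ξ
  have him2 : d2.im = 0 := by rw [← haxis2.deriv]; exact hre2 ξ
  have him3 : d3.im = 0 := by rw [← haxis3.deriv]; exact hre3 ξ
  have hcj1 : conj d1 = d1 := Complex.conj_eq_iff_im.mpr him1
  have hcj2 : conj d2 = d2 := Complex.conj_eq_iff_im.mpr him2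
  have hcj3 : conj d3 = d3 := Complex.conj_eq_iff_im.mpr him3
  have hd31 : d3 = d1 := by
    rw [← haxis3.deriv, ← haxis1.deriv]
    congr 1
    funext t
    exact (hsymc ξ ξ t).symm ▸ rfl
  have hlin : ∀ v1 v2 v3 : ℝ,
      F (v1, v2, v3) = (v1 : ℂ) * d1 + (v2 : ℂ) * d2 + (v3 : ℂ) * d3 := by
    intro v1 v2 v3
    have hv : ((v1, v2, v3) : ℝ × ℝ × ℝ)
        = v1 • ((1, 0, 0) : ℝ × ℝ × ℝ) + v2 • ((0, 1, 0) : ℝ × ℝ × ℝ)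
          + v3 • ((0, 0, 1) : ℝ × ℝ × ℝ) := by
      simp [Prod.ext_iff]
    rw [hv, map_add, map_add, map_smul, map_smul, map_smul]
    simp [hd1, hd2, hd3, Complex.real_smul]
  constructor
  · have hcj : conj (c (ξ, ξ, ξ)) = c (ξ, ξ, ξ) := Complex.conj_eq_iff_im.mpr (hre ξ)
    simp only [quarticMassSymbol, hcj]
    ring
  · intro v1 v2 v3 v4 hv
    have hA := hcurve v1 v2 v3
    have hB := hcurve v1 v4 v3
    have hC := (hcurve v2 v3 v4).star
    have hD := (hcurve v2 v1 v4).star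
    have hmain : HasDerivAt
        (fun t : ℝ =>
          quarticMassSymbol c (ξ + t * v1) (ξ + t * v2) (ξ + t * v3) (ξ + t * v4))
        ((Complex.I / 4) *
          (-(F (v1, v2, v3) + F (v1, v4, v3))
            + (star (F (v2, v3, v4)) + star (F (v2, v1, v4))))) 0 := by
      simpa [quarticMassSymbol] using (((hA.add hB).neg).add (hC.add hD)).const_mul (Complex.I / 4)
    rw [hmain.deriv]
    have hst : ∀ z : ℂ, star z = conj z := fun z => rfl
    rw [hlin v1 v2 v3, hlin v1 v4 v3, hlin v2 v3 v4, hlin v2 v1 v4]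
    simp only [hst, map_add, map_mul, Complex.conj_ofReal, hcj1, hcj2, hcj3]
    have hv' : (v1 : ℂ) - v2 + v3 - v4 = 0 := by exact_mod_cast hv
    linear_combination (Complex.I / 4) * ((d2 - 2 * d1) * hv')
      + (Complex.I / 4) * (2 * (v4 : ℂ) - 2 * (v3 : ℂ)) * hd31
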